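/- Let (F_k)_{k∈K} be a finite family of faces of a triangulated surface with vertex list r : ι → ℝ³, and suppose the surface is closed and oriented, i.e., the multiset of directed edges {(F₀,F₁), (F₁,F₂), (F₂,F₀) : F a face} is equal to the multiset of the reversed pairs. Then the total area vector vanishes: Σ_F S_F = 0. -/

import Mathlib

open Matrix BigOperators

/-- The area vector of a triangular face `T = (T₀, T₁, T₂)` with vertex list `r`:
`S_T = (1/2) (r T₁ - r T₀) ⨯₃ (r T₂ - r T₀)`. -/
noncomputable def faceAreaVec {ι : Type*} (r : ι → Fin 3 → ℝ) (T : ι × ι × ι) : Fin 3 → ℝ :=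
  (1 / 2 : ℝ) • ((r T.2.1 - r T.1) ⨯₃ (r T.2.2 - r T.1))

/-- The multiset of directed edges `(T₀,T₁), (T₁,T₂), (T₂,T₀)` over all faces of a
triangulated surface. -/
def surfEdges {K ι : Type*} [Fintype K] (F : K → ι × ι × ι) : Multiset (ι × ι) :=
  (Finset.univ : Finset K).val.bind fun k =>
    {((F k).1, (F k).2.1), ((F k).2.1, (F k).2.2), ((F k).2.2, (F k).1)}

lemma cross_expand (a b c : Fin 3 → ℝ) :
    (b - a) ⨯₃ (c - a) = a ⨯₃ b + b ⨯₃ c + c ⨯₃ a := by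
  simp only [crossProduct]
  ext i
  fin_cases i <;> simp <;> ring

/-- For a closed oriented triangulated surface (the multiset of directed
edges equals the multiset of the reversed pairs), the total area vector vanishes. -/
theorem stmt7 {K ι : Type*} [Fintype K] (F : K → ι × ι × ι) (r : ι → Fin 3 → ℝ)
    (hclosed : surfEdges F = (surfEdges F).map Prod.swap) :
    ∑ k : K, faceAreaVec r (F k) = 0 := by
  set g : ι × ι → Fin 3 → ℝ := fun p => r p.1 ⨯₃ r p.2 with hg
  have hsum : ∑ k : K, faceAreaVec r (F k)
      = (1 / 2 : ℝ) • ((surfEdges F).map g).sum := by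
    rw [surfEdges, Multiset.map_bind, Multiset.sum_bind]
    rw [show (Multiset.map (fun a => (Multiset.map g
        {((F a).1, (F a).2.1), ((F a).2.1, (F a).2.2), ((F a).2.2, (F a).1)}).sum)
        Finset.univ.val).sum = ∑ k : K, (Multiset.map g
        {((F k).1, (F k).2.1), ((F k).2.1, (F k).2.2), ((F k).2.2, (F k).1)}).sum from rfl]
    rw [Finset.smul_sum]
    apply Finset.sum_congr rfl
    intro k _
    simp only [faceAreaVec]
    rw [cross_expand]
    simp [hg, add_assoc]
  have hswap : ((surfEdges F).map g).sum = -((surfEdges F).map g).sum := by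
    conv_lhs => rw [hclosed]
    rw [Multiset.map_map]
    rw [show Multiset.map (g ∘ Prod.swap) (surfEdges F)
        = Multiset.map (fun p => -(g p)) (surfEdges F) from
      Multiset.map_congr rfl fun p _ => by
        simp only [Function.comp_apply, hg, Prod.fst_swap, Prod.snd_swap]
        rw [← cross_anticomm]]
    simp [Multiset.sum_map_neg']
  have h0 : ((surfEdges F).map g).sum = 0 := by
    funext i
    have := congrFun hswap i
    simp only [Pi.neg_apply] at this
    have : ((surfEdges F).map g).sum i = 0 := by linarith
    simpa using this
  rw [hsum, h0, smul_zero]
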